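/- arXiv:0809.0550 — 6 statements merged into one kernel-verified Lean document; each statement's English description precedes it below -/
import Mathlib

section
/- Let Δ be a positive nonsquare integer. The map sending the form f = a·X² + 2·b·X·Y + c·Y² (with b² - a·c = Δ, a ≠ 0) to the real number ω(f) := (-b - √Δ)/a is equivariant for the SL(2,ℤ) actions: for M ∈ SL(2,ℤ), ω(f·M) = M⁻¹·ω(f), where f·M denotes the form obtained by substituting the linear change of variables given by M, and M⁻¹ acts by linear fractional transformation. -/
/-!
Put `t = √Δ` and `ω = (-b - t)/a`. Over `ℝ` the form factors as
`a·f(x, y) = (a x + b y - t y)(a x + b y + t y)`, and `-r ω + p = (a p + b r + r t)/a`.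
Since `t` is irrational, the integers `m, n` with `m + n t = 0` are both zero; as `(p, r)`,
the first column of `M`, is not zero, neither factor vanishes at `(p, r)`. Hence
`a' = f(p, r) ≠ 0`, the linear fractional transformation is defined at `ω`, and the
equivariance itself is a polynomial identity modulo `t² = b² - a c` and `p s - q r = 1`.
-/

theorem Irrational.intCast_add_intCast_mul_ne_zero {x : ℝ} (hx : Irrational x) {m n : ℤ}
    (hmn : m ≠ 0 ∨ n ≠ 0) : (m : ℝ) + n * x ≠ 0 := by
  rcases eq_or_ne n 0 with rfl | hn
  · simpa using hmn.resolve_right (not_not.2 rfl)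
  · exact ((hx.intCast_mul hn).intCast_add m).ne_zero

theorem mul_add_mul_ne_zero_or_ne_zero_of_det_eq_one {a b p q r s : ℤ} (ha : a ≠ 0)
    (hdet : p * s - q * r = 1) : a * p + b * r ≠ 0 ∨ r ≠ 0 := by
  refine or_iff_not_imp_right.2 fun hr => ?_
  obtain rfl : r = 0 := not_not.1 hr
  have hp : p ≠ 0 := by rintro rfl; simp at hdet
  simpa using mul_ne_zero ha hp

theorem omega_equivariant_general (Δ a b c p q r s : ℤ) (hΔpos : 0 < Δ) (hΔns : ¬ IsSquare Δ)
    (ha : a ≠ 0) (hf : b ^ 2 - a * c = Δ) (hdet : p * s - q * r = 1)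
    -- coefficients of f·M
    (a' b' : ℤ)
    (ha' : a' = a * p ^ 2 + 2 * b * p * r + c * r ^ 2)
    (hb' : b' = a * p * q + b * (p * s + q * r) + c * r * s) :
    a' ≠ 0 ∧
      ((-b' : ℝ) - Real.sqrt Δ) / a' =
        ((s : ℝ) * ((-b - Real.sqrt Δ) / a) + (-q)) /
          ((-r : ℝ) * ((-b - Real.sqrt Δ) / a) + p) := by
  set t := Real.sqrt Δ
  have ht : t ^ 2 = Δ := Real.sq_sqrt (by positivity)
  have hirr : Irrational t := (irrational_sqrt_intCast_iff_of_nonneg hΔpos.le).2 hΔns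
  have hcol := mul_add_mul_ne_zero_or_ne_zero_of_det_eq_one (b := b) ha hdet
  have hplus := hirr.intCast_add_intCast_mul_ne_zero hcol
  have hminus := hirr.neg.intCast_add_intCast_mul_ne_zero hcol
  have haR : (a : ℝ) ≠ 0 := Int.cast_ne_zero.2 ha
  have hfR : (b : ℝ) ^ 2 - a * c = Δ := by exact_mod_cast hf
  have hdetR : (p : ℝ) * s - q * r = 1 := by exact_mod_cast hdet
  have ha'R : (a' : ℝ) ≠ 0 := by
    have hfactor :
        (a : ℝ) * a' = ((a * p + b * r : ℤ) + r * -t) * ((a * p + b * r : ℤ) + r * t) := by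
      rw [ha']; push_cast; linear_combination (r : ℝ) ^ 2 * (ht - hfR)
    exact right_ne_zero_of_mul (hfactor ▸ mul_ne_zero hminus hplus)
  have hden : (-r : ℝ) * ((-b - t) / a) + p = ((a * p + b * r : ℤ) + r * t) / a := by
    push_cast; field_simp; ring
  refine ⟨Int.cast_ne_zero.1 ha'R, ?_⟩
  rw [hden, div_eq_div_iff ha'R (div_ne_zero hplus haR)]
  subst ha' hb'
  push_cast
  field_simp
  linear_combination (-(r : ℝ)) * ht + ((a * p + b * r) * t + r * Δ) * hdetR
    + (r * (p * s - q * r)) * hfR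

theorem omega_equivariant (Δ a b c p q r s : ℤ) (hΔpos : 0 < Δ) (hΔns : ¬ IsSquare Δ)
    (ha : a ≠ 0) (hf : b ^ 2 - a * c = Δ) (hdet : p * s - q * r = 1)
    -- coefficients of f·M
    (a' b' c' : ℤ)
    (ha' : a' = a * p ^ 2 + 2 * b * p * r + c * r ^ 2)
    (hb' : b' = a * p * q + b * (p * s + q * r) + c * r * s)
    (hc' : c' = a * q ^ 2 + 2 * b * q * s + c * s ^ 2) :
    a' ≠ 0 ∧
      ((-b' : ℝ) - Real.sqrt Δ) / a' =
        ((s : ℝ) * ((-b - Real.sqrt Δ) / a) + (-q)) /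
          ((-r : ℝ) * ((-b - Real.sqrt Δ) / a) + p) :=
  omega_equivariant_general Δ a b c p q r s hΔpos hΔns ha hf hdet a' b' ha' hb'
end

section
/- Let x be a real quadratic irrational. The stabilizer of x in PSL(2,ℤ) (= SL(2,ℤ)/{±1}) under the linear fractional action is an infinite cyclic group. -/
/-- Linear fractional action of `SL(2,ℤ)` on reals. -/
noncomputable def lfa (M : Matrix.SpecialLinearGroup (Fin 2) ℤ) (x : ℝ) : ℝ :=
  ((M.1 0 0 : ℝ) * x + (M.1 0 1 : ℝ)) / ((M.1 1 0 : ℝ) * x + (M.1 1 1 : ℝ))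

/-!
For irrational `x`, the equation `lfa M x = x` says that `(x, 1)` is an eigenvector of `M`; its
eigenvalue `λ = M₁₀ x + M₁₁` is an injective homomorphism from the stabilizer of `x` to `ℝˣ`,
since a matrix fixing `x` with eigenvalue `1` is the identity. As `λ + λ⁻¹ = tr M ∈ ℤ`, the
eigenvalues are discrete: among the stabilizer elements with `λ > 1` there is one, `M`, with least
`λ`, and dividing by powers of `M` shows that the stabilizer is `±M^ℤ`. Such elements exist because
`x` is a quadratic irrational: a solution `(p, q)` of Pell's equation `p² - (b² - 4ac) q² = 1`
gives the stabilizer element `[[p - bq, -2cq], [2aq, p + bq]]` with eigenvalue `p + q (2ax + b)`.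
-/

open scoped MatrixGroups

theorem Irrational.eq_zero_of_intCast_mul_add_eq_zero {x : ℝ} (hx : Irrational x) {r s : ℤ}
    (h : r * x + s = 0) : r = 0 ∧ s = 0 := by
  obtain rfl : r = 0 := by
    by_contra hr
    exact ((hx.intCast_mul hr).add_intCast s).ne_zero h
  exact ⟨rfl, by simpa using h⟩

theorem le_of_add_inv_le_add_inv {u v : ℝ} (hv : 1 ≤ v) (h : u + u⁻¹ ≤ v + v⁻¹) : u ≤ v := by
  by_contra! hvu
  have hv0 : 0 < v := by linarith
  have hu0 : 0 < u := by linarith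
  have hdiff : u + u⁻¹ - (v + v⁻¹) = (u - v) * (u * v - 1) / (u * v) := by
    field_simp
    ring
  have hpos : 0 < (u - v) * (u * v - 1) / (u * v) :=
    div_pos (mul_pos (by linarith) (by nlinarith)) (by positivity)
  linarith

section Stabilizer

variable {x : ℝ}

/-- If `M` fixes `x`, then `(x, 1)` is an eigenvector of `M` with eigenvalue `lfaDenom M x`. -/
noncomputable def lfaDenom (M : SL(2, ℤ)) (x : ℝ) : ℝ := M 1 0 * x + M 1 1

theorem lfaDenom_ne_zero (hx : Irrational x) (M : SL(2, ℤ)) : lfaDenom M x ≠ 0 := by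
  intro h
  obtain ⟨h10, h11⟩ := hx.eq_zero_of_intCast_mul_add_eq_zero h
  have hdet := M.det_coe
  rw [Matrix.det_fin_two, h10, h11] at hdet
  simp at hdet

theorem lfaDenom_one : lfaDenom 1 x = 1 := by
  simp [lfaDenom]

theorem lfaDenom_neg (M : SL(2, ℤ)) : lfaDenom (-M) x = -lfaDenom M x := by
  simp only [lfaDenom, Matrix.SpecialLinearGroup.coe_neg, Matrix.neg_apply, Int.cast_neg]
  ring

theorem lfa_one : lfa 1 x = x := by
  simp [lfa]

theorem lfa_neg (M : SL(2, ℤ)) : lfa (-M) x = lfa M x := by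
  simp only [lfa, Matrix.SpecialLinearGroup.coe_neg, Matrix.neg_apply, Int.cast_neg]
  rw [← neg_div_neg_eq]
  ring_nf

theorem lfa_mul (hx : Irrational x) (M N : SL(2, ℤ)) : lfa (M * N) x = lfa M (lfa N x) := by
  have hN := lfaDenom_ne_zero hx N
  simp only [lfaDenom] at hN
  simp only [lfa, Matrix.SpecialLinearGroup.coe_mul, Matrix.mul_apply, Fin.sum_univ_two,
    Int.cast_add, Int.cast_mul]
  rw [mul_div_assoc', mul_div_assoc', div_add' _ _ _ hN, div_add' _ _ _ hN,
    div_div_div_cancel_right₀ hN]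
  ring_nf

theorem lfa_eq_self_iff (hx : Irrational x) {M : SL(2, ℤ)} :
    lfa M x = x ↔ M 0 0 * x + M 0 1 = x * lfaDenom M x :=
  div_eq_iff (lfaDenom_ne_zero hx M)

def lfaStabilizer (hx : Irrational x) : Subgroup SL(2, ℤ) where
  carrier := {M | lfa M x = x}
  one_mem' := lfa_one
  mul_mem' {M N} (hM : lfa M x = x) (hN : lfa N x = x) := by
    show lfa (M * N) x = x
    rw [lfa_mul hx, hN, hM]
  inv_mem' {M} (hM : lfa M x = x) := by
    show lfa M⁻¹ x = x
    rw [← hM, ← lfa_mul hx, inv_mul_cancel, lfa_one, hM]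

theorem lfaDenom_mul (hx : Irrational x) (M : SL(2, ℤ)) {N : SL(2, ℤ)} (hN : lfa N x = x) :
    lfaDenom (M * N) x = lfaDenom M x * lfaDenom N x := by
  rw [lfa_eq_self_iff hx] at hN
  simp only [lfaDenom, Matrix.SpecialLinearGroup.coe_mul, Matrix.mul_apply, Fin.sum_univ_two,
    Int.cast_add, Int.cast_mul] at hN ⊢
  linear_combination (M 1 0 : ℝ) * hN

noncomputable def lfaDenomHom (hx : Irrational x) : lfaStabilizer hx →* ℝˣ where
  toFun M := Units.mk0 (lfaDenom M x) (lfaDenom_ne_zero hx M)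
  map_one' := Units.ext lfaDenom_one
  map_mul' M N := Units.ext (lfaDenom_mul hx M N.2)

theorem lfaDenom_zpow (hx : Irrational x) {M : SL(2, ℤ)} (hM : lfa M x = x) (k : ℤ) :
    lfaDenom (M ^ k) x = lfaDenom M x ^ k := by
  have h := congrArg Units.val (map_zpow (lfaDenomHom hx) ⟨M, hM⟩ k)
  rwa [Units.val_zpow_eq_zpow_val] at h

theorem eq_one_of_lfaDenom_eq_one (hx : Irrational x) {M : SL(2, ℤ)} (hM : lfa M x = x)
    (h : lfaDenom M x = 1) : M = 1 := by
  rw [lfa_eq_self_iff hx, h] at hM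
  obtain ⟨h10, h11⟩ := hx.eq_zero_of_intCast_mul_add_eq_zero (r := M 1 0) (s := M 1 1 - 1)
    (by unfold lfaDenom at h; push_cast; linear_combination h)
  rw [sub_eq_zero] at h11
  have hdet := M.det_coe
  rw [Matrix.det_fin_two] at hdet
  have h00 : M 0 0 = 1 := by rw [h10] at hdet; linear_combination hdet - M 0 0 * h11
  obtain ⟨-, h01⟩ := hx.eq_zero_of_intCast_mul_add_eq_zero (r := M 0 0 - 1) (s := M 0 1)
    (by push_cast; linear_combination hM)
  ext i j
  fin_cases i <;> fin_cases j <;> simp [h00, h01, h10, h11]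

theorem lfaDenom_add_inv (hx : Irrational x) {M : SL(2, ℤ)} (hM : lfa M x = x) :
    lfaDenom M x + (lfaDenom M x)⁻¹ = M 0 0 + M 1 1 := by
  have hψ := lfaDenom_ne_zero hx M
  rw [lfa_eq_self_iff hx] at hM
  have hdet := M.det_coe
  rw [Matrix.det_fin_two] at hdet
  have hdet' : (M 0 0 * M 1 1 - M 0 1 * M 1 0 : ℝ) = 1 := by exact_mod_cast hdet
  field_simp
  simp only [lfaDenom] at hM ⊢
  linear_combination (-(M 1 0 : ℝ)) * hM - hdet'

theorem exists_min_one_lt_lfaDenom (hx : Irrational x)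
    (h : ∃ M : SL(2, ℤ), lfa M x = x ∧ 1 < lfaDenom M x) :
    ∃ M : SL(2, ℤ), lfa M x = x ∧ 1 < lfaDenom M x ∧
      ∀ N : SL(2, ℤ), lfa N x = x → 1 < lfaDenom N x → lfaDenom M x ≤ lfaDenom N x := by
  obtain ⟨t, ⟨M, hM, hM1, rfl⟩, hmin⟩ := Int.exists_least_of_bdd
    (P := fun t => ∃ M : SL(2, ℤ), lfa M x = x ∧ 1 < lfaDenom M x ∧ M 0 0 + M 1 1 = t)
    ⟨0, fun t ⟨M, hM, hM1, ht⟩ => by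
      have : (0 : ℝ) < M 0 0 + M 1 1 := by
        rw [← lfaDenom_add_inv hx hM]
        positivity
      rw [← ht]
      exact_mod_cast this.le⟩
    (let ⟨M, hM, hM1⟩ := h; ⟨_, M, hM, hM1, rfl⟩)
  refine ⟨M, hM, hM1, fun N hN hN1 => le_of_add_inv_le_add_inv hN1.le ?_⟩
  rw [lfaDenom_add_inv hx hM, lfaDenom_add_inv hx hN]
  exact_mod_cast hmin _ ⟨N, hN, hN1, rfl⟩

theorem eq_zpow_of_lfaDenom_pos (hx : Irrational x) {M N : SL(2, ℤ)} (hM : lfa M x = x)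
    (hM1 : 1 < lfaDenom M x)
    (hmin : ∀ P : SL(2, ℤ), lfa P x = x → 1 < lfaDenom P x → lfaDenom M x ≤ lfaDenom P x)
    (hN : lfa N x = x) (hN0 : 0 < lfaDenom N x) : ∃ k : ℤ, N = M ^ k := by
  obtain ⟨k, hk⟩ := exists_mem_Ico_zpow hN0 hM1
  have hMk : lfa (M ^ k) x = x := (lfaStabilizer hx).zpow_mem hM k
  set P := N * (M ^ k)⁻¹
  have hP : lfa P x = x := (lfaStabilizer hx).mul_mem hN ((lfaStabilizer hx).inv_mem hMk)
  have hNP : lfaDenom N x = lfaDenom P x * lfaDenom M x ^ k := by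
    rw [← lfaDenom_zpow hx hM, ← lfaDenom_mul hx P hMk, inv_mul_cancel_right]
  have hMk0 : 0 < lfaDenom M x ^ k := zpow_pos (by linarith) k
  rw [hNP, zpow_add_one₀ (by linarith), Set.mem_Ico] at hk
  have hP1 : lfaDenom P x = 1 := by
    refine le_antisymm ?_ (le_of_mul_le_mul_right (by linarith [hk.1]) hMk0)
    by_contra! hP1
    nlinarith [hmin P hP hP1]
  exact ⟨k, mul_inv_eq_one.mp (eq_one_of_lfaDenom_eq_one hx hP hP1)⟩

end Stabilizer

section QuadraticIrrational

variable {x : ℝ} {a b c : ℤ}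

theorem intCast_discrim_eq_sq (hroot : (a : ℝ) * x ^ 2 + b * x + c = 0) :
    ((discrim a b c : ℤ) : ℝ) = (2 * a * x + b) ^ 2 := by
  push_cast [discrim]
  exact discrim_eq_sq_of_quadratic_eq_zero (by linear_combination hroot)

theorem not_isSquare_discrim_of_irrational (hx : Irrational x) (ha : a ≠ 0)
    (hroot : (a : ℝ) * x ^ 2 + b * x + c = 0) : ¬IsSquare (discrim a b c) := by
  rintro ⟨e, he⟩
  have hsq : (2 * a * x + b) ^ 2 = (e : ℝ) ^ 2 := by
    rw [← intCast_discrim_eq_sq hroot, he]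
    push_cast
    ring
  have h2a : 2 * a ≠ 0 := by omega
  rcases sq_eq_sq_iff_eq_or_eq_neg.mp hsq with h | h
  · exact h2a (hx.eq_zero_of_intCast_mul_add_eq_zero (r := 2 * a) (s := b - e)
      (by push_cast; linarith)).1
  · exact h2a (hx.eq_zero_of_intCast_mul_add_eq_zero (r := 2 * a) (s := b + e)
      (by push_cast; linarith)).1

theorem discrim_pos_of_irrational (hx : Irrational x) (ha : a ≠ 0)
    (hroot : (a : ℝ) * x ^ 2 + b * x + c = 0) : 0 < discrim a b c := by
  have hnonneg : (0 : ℝ) ≤ discrim a b c := intCast_discrim_eq_sq hroot ▸ sq_nonneg _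
  refine lt_of_le_of_ne (mod_cast hnonneg) fun h => ?_
  exact not_isSquare_discrim_of_irrational hx ha hroot ⟨0, by rw [← h]; rfl⟩

theorem exists_lfaDenom_eq_of_pell (hx : Irrational x) (hroot : (a : ℝ) * x ^ 2 + b * x + c = 0)
    {p y : ℤ} (hpell : p ^ 2 - discrim a b c * y ^ 2 = 1) :
    ∃ M : SL(2, ℤ), lfa M x = x ∧ lfaDenom M x = p + y * (2 * a * x + b) := by
  rw [discrim] at hpell
  let M : SL(2, ℤ) := ⟨!![p - b * y, -(2 * c * y); 2 * a * y, p + b * y], by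
    rw [Matrix.det_fin_two_of]
    linear_combination hpell⟩
  have hψ : lfaDenom M x = p + y * (2 * a * x + b) := by
    simp only [lfaDenom, Fin.isValue, Matrix.of_apply, Matrix.cons_val', Matrix.cons_val_zero,
      Matrix.cons_val_fin_one, Matrix.cons_val_one, Int.cast_mul, Int.cast_ofNat, Int.cast_add, M]
    ring
  refine ⟨M, (lfa_eq_self_iff hx).mpr ?_, hψ⟩
  rw [hψ]
  simp only [Fin.isValue, Matrix.of_apply, Matrix.cons_val', Matrix.cons_val_zero,
    Matrix.cons_val_fin_one, Int.cast_sub, Int.cast_mul, Matrix.cons_val_one, Int.cast_neg,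
    Int.cast_ofNat, M]
  linear_combination (-2 * y : ℝ) * hroot

theorem exists_one_lt_lfaDenom (hx : Irrational x) (ha : a ≠ 0)
    (hroot : (a : ℝ) * x ^ 2 + b * x + c = 0) :
    ∃ M : SL(2, ℤ), lfa M x = x ∧ 1 < lfaDenom M x := by
  obtain ⟨s, hs1, hs0⟩ := Pell.Solution₁.exists_pos_of_not_isSquare
    (discrim_pos_of_irrational hx ha hroot) (not_isSquare_discrim_of_irrational hx ha hroot)
  have hs1' : (1 : ℝ) < s.x := by exact_mod_cast hs1
  have hs0' : (0 : ℝ) < s.y := by exact_mod_cast hs0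
  -- `2 a x + b = ±√(discrim a b c)`: take `y = ±s.y` with the same sign.
  rcases le_or_gt 0 (2 * a * x + b : ℝ) with h | h
  · obtain ⟨M, hM, hψ⟩ := exists_lfaDenom_eq_of_pell hx hroot s.prop
    exact ⟨M, hM, by rw [hψ]; nlinarith⟩
  · obtain ⟨M, hM, hψ⟩ := exists_lfaDenom_eq_of_pell hx hroot (p := s.x) (y := -s.y)
      (by rw [neg_sq]; exact s.prop)
    exact ⟨M, hM, by rw [hψ]; push_cast; nlinarith⟩

end QuadraticIrrational

/-- The stabilizer of a real quadratic irrational `x` in `PSL(2,ℤ)` is infinite cyclic: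
there is `M` fixing `x` whose class mod `±1` has infinite order and generates
the stabilizer mod `±1`. -/
theorem stabilizer_infinite_cyclic (x : ℝ) (hx : Irrational x)
    (a b c : ℤ) (ha : a ≠ 0) (hroot : (a : ℝ) * x ^ 2 + b * x + c = 0) :
    ∃ M : Matrix.SpecialLinearGroup (Fin 2) ℤ, lfa M x = x ∧
      (∀ k : ℤ, k ≠ 0 → M ^ k ≠ 1 ∧ M ^ k ≠ -1) ∧
      (∀ N : Matrix.SpecialLinearGroup (Fin 2) ℤ, lfa N x = x →
        ∃ k : ℤ, N = M ^ k ∨ N = -(M ^ k)) := by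
  obtain ⟨M, hM, hM1, hmin⟩ :=
    exists_min_one_lt_lfaDenom hx (exists_one_lt_lfaDenom hx ha hroot)
  refine ⟨M, hM, fun k hk => ⟨fun h => ?_, fun h => ?_⟩, fun N hN => ?_⟩
  · have hψ := lfaDenom_zpow hx hM k
    rw [h, lfaDenom_one, eq_comm, zpow_eq_one_iff_right₀ (by linarith) hM1.ne'] at hψ
    exact hk hψ
  · have hψ := lfaDenom_zpow hx hM k
    rw [h, lfaDenom_neg, lfaDenom_one] at hψ
    linarith [zpow_pos (by linarith : (0 : ℝ) < lfaDenom M x) k]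
  · rcases (lfaDenom_ne_zero hx N).lt_or_gt with hN0 | hN0
    · obtain ⟨k, hk⟩ := eq_zpow_of_lfaDenom_pos hx hM hM1 hmin (N := -N) (by rwa [lfa_neg])
        (by rw [lfaDenom_neg]; linarith)
      exact ⟨k, Or.inr (by rw [← hk, neg_neg])⟩
    · obtain ⟨k, hk⟩ := eq_zpow_of_lfaDenom_pos hx hM hM1 hmin hN hN0
      exact ⟨k, Or.inl hk⟩
end

section
/- Let Δ be a positive nonsquare integer and f = a·X² + 2·b·X·Y + c·Y² a form with b² - a·c = Δ. Then the group of automorphs of f in SL(2,ℤ) modulo {±1}, i.e. { M ∈ SL(2,ℤ) : f·M = f }/{±1}, is infinite cyclic. -/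
/-!
An automorph `M = !![p, q; r, s]` of `f` commutes with `J = !![-b, -c; a, b]`, whose square is
`Δ • 1`, so `M = t • 1 + u • J` with `t = (p + s) / 2` and `u = r / a`. Hence `M ↦ t + u √Δ`
is an injective homomorphism from the automorphs to `ℝ`, sending `-1` to `-1`. A value `ε` of
it satisfies `ε + ε⁻¹ = p + s ∈ ℤ`, and `x ↦ x + x⁻¹` is increasing on `[1, ∞)`, so among the
values `> 1`, which exist by Pell's equation, there is a least one; as for Pell's equation, every
positive value is an integral power of that one.
-/

/-- Coefficients of the form `f·M`, for `f = [a, b, c]` and `M = [[p,q],[r,s]]`. -/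
def formSub (a b c p q r s : ℤ) : ℤ × ℤ × ℤ :=
  (a * p ^ 2 + 2 * b * p * r + c * r ^ 2,
   a * p * q + b * (p * s + q * r) + c * r * s,
   a * q ^ 2 + 2 * b * q * s + c * s ^ 2)

theorem add_inv_lt_add_inv {x y : ℝ} (hx : 1 ≤ x) (hxy : x < y) : x + x⁻¹ < y + y⁻¹ := by
  have hx₀ : 0 < x := by linarith
  have hy₀ : 0 < y := by linarith
  have key : y + y⁻¹ - (x + x⁻¹) = (y - x) * (x * y - 1) / (x * y) := by
    field_simp
    ring
  have : 0 < (y - x) * (x * y - 1) / (x * y) :=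
    div_pos (mul_pos (by linarith) (by nlinarith)) (mul_pos hx₀ hy₀)
  linarith

theorem Irrational.intCast_add_intCast_mul_inj {x : ℝ} (hx : Irrational x) {m n m' n' : ℤ}
    (h : m + n * x = m' + n' * x) : m = m' ∧ n = n' := by
  have hn : n = n' := by
    by_contra hne
    have hsub : ((n - n' : ℤ) : ℝ) ≠ 0 := Int.cast_ne_zero.mpr (sub_ne_zero.mpr hne)
    refine hx.ne_rational (m' - m) (n - n') ?_
    rw [eq_div_iff hsub]
    push_cast
    linarith
  subst hn
  exact ⟨by exact_mod_cast add_right_cancel h, rfl⟩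

namespace MonoidHom

variable {G : Type*} [Group G] (φ : G →* ℝ)

theorem exists_min_one_lt (hint : ∀ g, ∃ n : ℤ, φ g + (φ g)⁻¹ = n) (hex : ∃ g, 1 < φ g) :
    ∃ g₀, 1 < φ g₀ ∧ ∀ g, 1 < φ g → φ g₀ ≤ φ g := by
  let P (n : ℤ) : Prop := ∃ g, 1 < φ g ∧ φ g + (φ g)⁻¹ = n
  have hbdd : ∀ n, P n → 0 ≤ n := by
    rintro n ⟨g, hg, hn⟩
    have hpos : (0 : ℝ) < φ g := zero_lt_one.trans hg
    exact Int.cast_nonneg_iff.mp (hn ▸ (by positivity : (0 : ℝ) ≤ φ g + (φ g)⁻¹))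
  have hP : ∃ n, P n := by
    obtain ⟨g, hg⟩ := hex
    obtain ⟨n, hn⟩ := hint g
    exact ⟨n, g, hg, hn⟩
  obtain ⟨n₀, ⟨g₀, hg₀, hn₀⟩, hleast⟩ := Int.exists_least_of_bdd ⟨0, hbdd⟩ hP
  refine ⟨g₀, hg₀, fun g hg => not_lt.mp fun hlt => ?_⟩
  obtain ⟨n, hn⟩ := hint g
  have : (n : ℝ) < n₀ := hn ▸ hn₀ ▸ add_inv_lt_add_inv hg.le hlt
  exact (Int.cast_lt.mp this).not_ge (hleast n ⟨g, hg, hn⟩)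

variable {φ}

theorem exists_eq_zpow_of_min_one_lt (hφ : Function.Injective φ) {g₀ : G} (h₀ : 1 < φ g₀)
    (hmin : ∀ g, 1 < φ g → φ g₀ ≤ φ g) {g : G} (hg : 0 < φ g) : ∃ k : ℤ, g = g₀ ^ k := by
  obtain ⟨k, hk₁, hk₂⟩ := exists_mem_Ico_zpow hg h₀
  refine ⟨k, ?_⟩
  have hpos : 0 < φ g₀ ^ k := zpow_pos (zero_lt_one.trans h₀) k
  have hquot : φ (g * (g₀ ^ k)⁻¹) = φ g / φ g₀ ^ k := by
    rw [map_mul, map_inv, map_zpow, div_eq_mul_inv]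
  have hge : 1 ≤ φ (g * (g₀ ^ k)⁻¹) := by rwa [hquot, one_le_div hpos]
  have hlt : φ (g * (g₀ ^ k)⁻¹) < φ g₀ := by
    rwa [hquot, div_lt_iff₀ hpos, ← zpow_one_add₀ (zero_lt_one.trans h₀).ne', add_comm]
  have hone : φ (g * (g₀ ^ k)⁻¹) = φ 1 := by
    rw [map_one]
    exact (hge.eq_or_lt.resolve_right fun h => (hmin _ h).not_gt hlt).symm
  exact mul_inv_eq_one.mp (hφ hone)

end MonoidHom

open Matrix

namespace Matrix.SpecialLinearGroup

theorem fin_two_det (M : SpecialLinearGroup (Fin 2) ℤ) : M 0 0 * M 1 1 - M 0 1 * M 1 0 = 1 := by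
  rw [← det_fin_two, M.det_coe]

theorem fin_two_mul_apply (M N : SpecialLinearGroup (Fin 2) ℤ) (i j : Fin 2) :
    (M * N) i j = M i 0 * N 0 j + M i 1 * N 1 j := by
  rw [coe_mul, mul_apply, Fin.sum_univ_two]

end Matrix.SpecialLinearGroup

open SpecialLinearGroup

section Automorphs

variable {a b c : ℤ} {M N : SpecialLinearGroup (Fin 2) ℤ}

-- `f·(MN) = (f·M)·N`, read off coefficientwise.
theorem formSub_mul_of_fixed (hM : formSub a b c (M 0 0) (M 0 1) (M 1 0) (M 1 1) = (a, b, c))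
    (N : SpecialLinearGroup (Fin 2) ℤ) :
    formSub a b c ((M * N) 0 0) ((M * N) 0 1) ((M * N) 1 0) ((M * N) 1 1) =
      formSub a b c (N 0 0) (N 0 1) (N 1 0) (N 1 1) := by
  simp only [formSub, Prod.mk.injEq] at hM ⊢
  obtain ⟨h₁, h₂, h₃⟩ := hM
  simp only [fin_two_mul_apply]
  refine ⟨?_, ?_, ?_⟩
  · linear_combination N 0 0 ^ 2 * h₁ + 2 * N 0 0 * N 1 0 * h₂ + N 1 0 ^ 2 * h₃
  · linear_combination
      N 0 0 * N 0 1 * h₁ + (N 0 0 * N 1 1 + N 0 1 * N 1 0) * h₂ + N 1 0 * N 1 1 * h₃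
  · linear_combination N 0 1 ^ 2 * h₁ + 2 * N 0 1 * N 1 1 * h₂ + N 1 1 ^ 2 * h₃

variable (a b c) in
def automorphs : Subgroup (SpecialLinearGroup (Fin 2) ℤ) where
  carrier := {M | formSub a b c (M 0 0) (M 0 1) (M 1 0) (M 1 1) = (a, b, c)}
  mul_mem' {M N} hM hN := (formSub_mul_of_fixed hM N).trans hN
  one_mem' := by simp [formSub]
  inv_mem' {M} hM := by
    have h := formSub_mul_of_fixed hM M⁻¹
    rw [mul_inv_cancel] at h
    rw [Set.mem_ofPred_eq, ← h]
    simp [formSub]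

theorem mem_automorphs_iff :
    M ∈ automorphs a b c ↔ formSub a b c (M 0 0) (M 0 1) (M 1 0) (M 1 1) = (a, b, c) :=
  Iff.rfl

theorem neg_mem_automorphs (hM : M ∈ automorphs a b c) : -M ∈ automorphs a b c := by
  simpa [automorphs, formSub] using hM

theorem linear_relations_of_mem_automorphs (hM : M ∈ automorphs a b c) :
    a * (M 1 1 - M 0 0) = 2 * b * M 1 0 ∧ a * M 0 1 = -(c * M 1 0) := by
  have hdet := fin_two_det M
  simp only [mem_automorphs_iff, formSub, Prod.mk.injEq] at hM
  obtain ⟨h₁, h₂, -⟩ := hM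
  constructor
  · linear_combination (-M 1 1) * h₁ + M 1 0 * h₂ + (a * M 0 0 + b * M 1 0) * hdet
  · linear_combination (-M 0 1) * h₁ + M 0 0 * h₂ - (b * M 0 0 + c * M 1 0) * hdet

variable (a b c) in
noncomputable def automorphUnit (M : SpecialLinearGroup (Fin 2) ℤ) : ℝ :=
  (M 0 0 + M 1 1 : ℝ) / 2 + M 1 0 / a * √(b ^ 2 - a * c : ℤ)

theorem automorphUnit_one : automorphUnit a b c 1 = 1 := by
  simp [automorphUnit]

theorem automorphUnit_neg (M : SpecialLinearGroup (Fin 2) ℤ) :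
    automorphUnit a b c (-M) = -automorphUnit a b c M := by
  simp only [automorphUnit, coe_neg, neg_apply, Int.cast_neg]
  ring

theorem sqrt_discr_sq (hD : 0 ≤ b ^ 2 - a * c) :
    √(b ^ 2 - a * c : ℤ) ^ 2 = (b ^ 2 - a * c : ℝ) := by
  exact_mod_cast Real.sq_sqrt (Int.cast_nonneg_iff.mpr hD)

theorem exists_entries_of_mem_automorphs (ha : a ≠ 0) (hM : M ∈ automorphs a b c) :
    ∃ t u : ℝ, automorphUnit a b c M = t + u * √(b ^ 2 - a * c : ℤ) ∧
      (M 0 0 : ℝ) = t - b * u ∧ (M 0 1 : ℝ) = -(c * u) ∧ (M 1 0 : ℝ) = a * u ∧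
      (M 1 1 : ℝ) = t + b * u := by
  obtain ⟨h₁, h₂⟩ := linear_relations_of_mem_automorphs hM
  have h₁' : (a : ℝ) * (M 1 1 - M 0 0) = 2 * b * M 1 0 := by exact_mod_cast h₁
  have h₂' : (a : ℝ) * M 0 1 = -(c * M 1 0) := by exact_mod_cast h₂
  have ha' : (a : ℝ) ≠ 0 := by exact_mod_cast ha
  refine ⟨_, _, rfl, ?_, ?_, ?_, ?_⟩ <;> field_simp
  · linear_combination -h₁'
  · linear_combination h₂'
  · linear_combination h₁'

theorem automorphUnit_mul (ha : a ≠ 0) (hD : 0 ≤ b ^ 2 - a * c) (hM : M ∈ automorphs a b c)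
    (hN : N ∈ automorphs a b c) :
    automorphUnit a b c (M * N) = automorphUnit a b c M * automorphUnit a b c N := by
  obtain ⟨t, u, hφM, hp, hq, hr, hs⟩ := exists_entries_of_mem_automorphs ha hM
  obtain ⟨t', u', hφN, hp', hq', hr', hs'⟩ := exists_entries_of_mem_automorphs ha hN
  have hsq := sqrt_discr_sq hD
  have ha' : (a : ℝ) ≠ 0 := by exact_mod_cast ha
  rw [hφM, hφN, automorphUnit]
  simp only [fin_two_mul_apply, Int.cast_add, Int.cast_mul, hp, hq, hr, hs, hp', hq', hr', hs']
  generalize √(b ^ 2 - a * c : ℤ) = d at hsq ⊢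
  field_simp
  linear_combination (-2 * u * u') * hsq

theorem automorphUnit_add_inv (ha : a ≠ 0) (hD : 0 ≤ b ^ 2 - a * c)
    (hM : M ∈ automorphs a b c) :
    automorphUnit a b c M + (automorphUnit a b c M)⁻¹ = (M 0 0 + M 1 1 : ℤ) := by
  obtain ⟨t, u, hφ, hp, hq, hr, hs⟩ := exists_entries_of_mem_automorphs ha hM
  have hsq := sqrt_discr_sq hD
  have hdet : (M 0 0 * M 1 1 - M 0 1 * M 1 0 : ℝ) = 1 := by exact_mod_cast fin_two_det M
  rw [hp, hq, hr, hs] at hdet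
  rw [hφ, Int.cast_add, hp, hs]
  generalize √(b ^ 2 - a * c : ℤ) = d at hsq ⊢
  have hnorm : (t + u * d) * (t - u * d) = 1 := by linear_combination hdet - u ^ 2 * hsq
  rw [inv_eq_of_mul_eq_one_right hnorm]
  ring

-- `2a` times the unit is `a (p + s) + 2r √Δ`, so irrationality of `√Δ` recovers `p + s` and `r`,
-- and the linear relations then recover the other entries.
theorem automorphUnit_injOn (ha : a ≠ 0) (hirr : Irrational √(b ^ 2 - a * c : ℤ)) :
    Set.InjOn (automorphUnit a b c) (automorphs a b c) := by
  intro M hM N hN h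
  have ha' : (a : ℝ) ≠ 0 := by exact_mod_cast ha
  have h' : ((a * (M 0 0 + M 1 1) : ℤ) : ℝ) + ((2 * M 1 0 : ℤ) : ℝ) * √(b ^ 2 - a * c : ℤ) =
      ((a * (N 0 0 + N 1 1) : ℤ) : ℝ) + ((2 * N 1 0 : ℤ) : ℝ) * √(b ^ 2 - a * c : ℤ) := by
    simp only [automorphUnit] at h
    generalize √(b ^ 2 - a * c : ℤ) = d at h ⊢
    field_simp at h
    push_cast
    linear_combination h
  obtain ⟨hatr, h2r⟩ := hirr.intCast_add_intCast_mul_inj h'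
  have htr := mul_left_cancel₀ ha hatr
  obtain ⟨hM₁, hM₂⟩ := linear_relations_of_mem_automorphs hM
  obtain ⟨hN₁, hN₂⟩ := linear_relations_of_mem_automorphs hN
  have hr : M 1 0 = N 1 0 := by omega
  have hq : M 0 1 = N 0 1 := mul_left_cancel₀ ha (by rw [hM₂, hN₂, hr])
  have hd : M 1 1 - M 0 0 = N 1 1 - N 0 0 := mul_left_cancel₀ ha (by rw [hM₁, hN₁, hr])
  ext i j
  fin_cases i <;> fin_cases j <;> simp <;> omega

noncomputable def automorphUnitHom (ha : a ≠ 0) (hD : 0 ≤ b ^ 2 - a * c) :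
    automorphs a b c →* ℝ where
  toFun M := automorphUnit a b c M
  map_one' := automorphUnit_one
  map_mul' M N := automorphUnit_mul ha hD M.2 N.2

theorem exists_one_lt_automorphUnit (ha : a ≠ 0) (hD : 0 < b ^ 2 - a * c)
    (hns : ¬IsSquare (b ^ 2 - a * c)) : ∃ M ∈ automorphs a b c, 1 < automorphUnit a b c M := by
  obtain ⟨ε, hx, hy⟩ := Pell.Solution₁.exists_pos_of_not_isSquare hD hns
  have hdet : (!![ε.x - b * ε.y, -(c * ε.y); a * ε.y, ε.x + b * ε.y]).det = 1 := by
    rw [det_fin_two_of]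
    linear_combination ε.prop
  -- the automorph `x • 1 + y • J` of a Pell solution `x + y √Δ`
  let M : SpecialLinearGroup (Fin 2) ℤ := ⟨_, hdet⟩
  have hp : M 0 0 = ε.x - b * ε.y := rfl
  have hq : M 0 1 = -(c * ε.y) := rfl
  have hr : M 1 0 = a * ε.y := rfl
  have hs : M 1 1 = ε.x + b * ε.y := rfl
  refine ⟨M, ?_, ?_⟩
  · rw [mem_automorphs_iff, hp, hq, hr, hs, formSub, Prod.mk.injEq, Prod.mk.injEq]
    exact ⟨by linear_combination a * ε.prop, by linear_combination b * ε.prop,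
      by linear_combination c * ε.prop⟩
  · have ha' : (a : ℝ) ≠ 0 := by exact_mod_cast ha
    have hφ : automorphUnit a b c M = ε.x + ε.y * √(b ^ 2 - a * c : ℤ) := by
      rw [automorphUnit, hp, hr, hs]
      push_cast
      field_simp
      ring
    have hx' : (1 : ℝ) < ε.x := by exact_mod_cast hx
    have : (0 : ℝ) ≤ ε.y * √(b ^ 2 - a * c : ℤ) := by positivity
    linarith

theorem automorphUnit_zpow (ha : a ≠ 0) (hD : 0 ≤ b ^ 2 - a * c) (hM : M ∈ automorphs a b c)
    (k : ℤ) : automorphUnit a b c (M ^ k) = automorphUnit a b c M ^ k :=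
  map_zpow (automorphUnitHom ha hD) ⟨M, hM⟩ k

theorem zpow_ne_one_and_ne_neg_one_of_one_lt_automorphUnit (ha : a ≠ 0)
    (hD : 0 ≤ b ^ 2 - a * c) (hM : M ∈ automorphs a b c) (h₁ : 1 < automorphUnit a b c M)
    {k : ℤ} (hk : k ≠ 0) :
    M ^ k ≠ 1 ∧ M ^ k ≠ -1 := by
  have hpow := automorphUnit_zpow ha hD hM k
  refine ⟨fun h => hk ?_, fun h => ?_⟩
  · rwa [h, automorphUnit_one, eq_comm, zpow_eq_one_iff_right₀ (by positivity) h₁.ne'] at hpow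
  · rw [h, automorphUnit_neg, automorphUnit_one] at hpow
    linarith [zpow_pos (zero_lt_one.trans h₁) k]

theorem exists_eq_zpow_or_eq_neg_zpow_of_automorphUnit_min (ha : a ≠ 0)
    (hD : 0 ≤ b ^ 2 - a * c) (hirr : Irrational √(b ^ 2 - a * c : ℤ)) (hM : M ∈ automorphs a b c)
    (h₁ : 1 < automorphUnit a b c M)
    (hmin : ∀ N ∈ automorphs a b c, 1 < automorphUnit a b c N →
      automorphUnit a b c M ≤ automorphUnit a b c N)
    (hN : N ∈ automorphs a b c) : ∃ k : ℤ, N = M ^ k ∨ N = -(M ^ k) := by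
  let φ := automorphUnitHom ha hD
  have hφ : Function.Injective φ := fun N N' h =>
    Subtype.ext (automorphUnit_injOn ha hirr N.2 N'.2 h)
  have of_pos {N : SpecialLinearGroup (Fin 2) ℤ} (hN : N ∈ automorphs a b c)
      (h : 0 < automorphUnit a b c N) : ∃ k : ℤ, N = M ^ k := by
    obtain ⟨k, hk⟩ := MonoidHom.exists_eq_zpow_of_min_one_lt hφ (g₀ := ⟨M, hM⟩) h₁
      (fun N' => hmin N' N'.2) (g := ⟨N, hN⟩) h
    exact ⟨k, congrArg Subtype.val hk⟩
  have hne : automorphUnit a b c N ≠ 0 :=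
    ((Group.isUnit (⟨N, hN⟩ : automorphs a b c)).map φ).ne_zero
  rcases hne.lt_or_gt with hneg | hpos
  · obtain ⟨k, hk⟩ := of_pos (neg_mem_automorphs hN) (by rw [automorphUnit_neg]; linarith)
    exact ⟨k, Or.inr (by rw [← hk, neg_neg])⟩
  · obtain ⟨k, hk⟩ := of_pos hN hpos
    exact ⟨k, Or.inl hk⟩

end Automorphs

theorem automorphs_infinite_cyclic (Δ a b c : ℤ) (hΔpos : 0 < Δ) (hΔns : ¬ IsSquare Δ)
    (hf : b ^ 2 - a * c = Δ) :
    ∃ M : Matrix.SpecialLinearGroup (Fin 2) ℤ,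
      formSub a b c (M.1 0 0) (M.1 0 1) (M.1 1 0) (M.1 1 1) = (a, b, c) ∧
      (∀ k : ℤ, k ≠ 0 → M ^ k ≠ 1 ∧ M ^ k ≠ -1) ∧
      (∀ N : Matrix.SpecialLinearGroup (Fin 2) ℤ,
        formSub a b c (N.1 0 0) (N.1 0 1) (N.1 1 0) (N.1 1 1) = (a, b, c) →
        ∃ k : ℤ, N = M ^ k ∨ N = -(M ^ k)) := by
  subst hf
  have ha : a ≠ 0 := by
    rintro rfl
    exact hΔns ⟨b, by ring⟩
  have hirr : Irrational √(b ^ 2 - a * c : ℤ) :=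
    irrational_sqrt_intCast_iff.mpr ⟨hΔns, hΔpos.le⟩
  obtain ⟨M, hM, h₁⟩ := exists_one_lt_automorphUnit ha hΔpos hΔns
  obtain ⟨⟨M₀, hM₀⟩, h₀, hmin⟩ := (automorphUnitHom ha hΔpos.le).exists_min_one_lt
    (fun N => ⟨_, automorphUnit_add_inv ha hΔpos.le N.2⟩) ⟨⟨M, hM⟩, h₁⟩
  refine ⟨M₀, hM₀, fun k => zpow_ne_one_and_ne_neg_one_of_one_lt_automorphUnit ha hΔpos.le hM₀ h₀,
    fun N => exists_eq_zpow_or_eq_neg_zpow_of_automorphUnit_min ha hΔpos.le hirr hM₀ h₀ ?_⟩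
  exact fun N hN => hmin ⟨N, hN⟩
end

section
/- Let f = a·X² + 2·b·X·Y + c·Y² with Δ := b² - a·c a positive nonsquare integer, and let m be a nonzero integer. If (X,Y) = (p,r) is a proper representation of m by f (i.e. f(p,r) = m and gcd(p,r) = 1), then there exists an integer n with n² ≡ Δ (mod m) and a matrix M = [[p,q],[r,s]] ∈ SL(2,ℤ) whose first column is (p,r) such that f·M = m·X² + 2·n·X·Y + ((n² - Δ)/m)·Y². -/
theorem formSub_discr (a b c p q r s : ℤ) :
    (formSub a b c p q r s).2.1 ^ 2 - (formSub a b c p q r s).1 * (formSub a b c p q r s).2.2 =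
      (b ^ 2 - a * c) * (p * s - q * r) ^ 2 := by
  simp only [formSub]
  ring

theorem Int.exists_det_eq_one_of_gcd_eq_one {p r : ℤ} (h : Int.gcd p r = 1) :
    ∃ q s : ℤ, p * s - q * r = 1 := by
  obtain ⟨u, v, huv⟩ := Int.isCoprime_iff_gcd_eq_one.mpr h
  exact ⟨-v, u, by linear_combination huv⟩

theorem proper_representation_gives_matrix_general (Δ a b c m p r : ℤ)
    (hf : b ^ 2 - a * c = Δ) (hm : m ≠ 0)
    (hrep : a * p ^ 2 + 2 * b * p * r + c * r ^ 2 = m) (hcop : Int.gcd p r = 1) :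
    ∃ n q s : ℤ, m ∣ n ^ 2 - Δ ∧ p * s - q * r = 1 ∧
      formSub a b c p q r s = (m, n, (n ^ 2 - Δ) / m) := by
  obtain ⟨q, s, hdet⟩ := Int.exists_det_eq_one_of_gcd_eq_one hcop
  obtain ⟨m', n, ℓ, hsub⟩ : ∃ m' n ℓ, formSub a b c p q r s = (m', n, ℓ) := ⟨_, _, _, rfl⟩
  have hm' : m' = m := by
    rw [← hrep]
    exact (congrArg Prod.fst hsub).symm
  have hdisc : n ^ 2 - Δ = m * ℓ := by
    have := formSub_discr a b c p q r s
    rw [hsub, hm', hdet, hf] at this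
    linarith
  refine ⟨n, q, s, ⟨ℓ, hdisc⟩, hdet, ?_⟩
  rw [hsub, hm', hdisc, Int.mul_ediv_cancel_left _ hm]

theorem proper_representation_gives_matrix (Δ a b c m p r : ℤ)
    (hΔpos : 0 < Δ) (hΔns : ¬ IsSquare Δ) (hf : b ^ 2 - a * c = Δ) (hm : m ≠ 0)
    (hrep : a * p ^ 2 + 2 * b * p * r + c * r ^ 2 = m) (hcop : Int.gcd p r = 1) :
    ∃ n q s : ℤ, m ∣ n ^ 2 - Δ ∧ p * s - q * r = 1 ∧
      formSub a b c p q r s = (m, n, (n ^ 2 - Δ) / m) :=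
  proper_representation_gives_matrix_general Δ a b c m p r hf hm hrep hcop
end

section
/- Let x and y be irrational real numbers and let M ∈ GL(2,ℤ) satisfy M·x = y under the linear fractional action. Then there exist nonnegative integers i, j such that x_i = y_j, where (x_i) and (y_j) are the derivative sequences of x and y (x₀ = x, x_{k+1} = 1/(x_k - ⌊x_k⌋), similarly for y). -/
noncomputable def cfShift (x : ℝ) : ℝ := 1 / (x - ⌊x⌋)

/-!
Normalise `y = (a x + b) / (c x + d)` so that `c x + d > 0`. Expanding `x` by one step replaces
the bottom row `(c, d)` by `(c ⌊x⌋ + d, c)` and multiplies the positive denominator by the next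
complete quotient; this forces the row to become positive, because while `c > 0` keeps meeting a
negative partner, `c` strictly drops every two steps. Once `c, d ≥ 1` and `y > 1`, the top row is
positive too. For a nonnegative unimodular matrix, expanding `y` is the Euclidean algorithm on the
matrix: it subtracts `⌊y⌋` times the bottom row from the top row and swaps the rows, until the
matrix is the translation `z ↦ z + b`.
-/

theorem cfShift_eq_inv_fract (x : ℝ) : cfShift x = (Int.fract x)⁻¹ := by
  rw [cfShift, one_div, Int.self_sub_floor]

theorem cfShift_add_intCast (x : ℝ) (b : ℤ) : cfShift (x + b) = cfShift x := by
  simp only [cfShift_eq_inv_fract, Int.fract_add_intCast]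

theorem Irrational.fract_pos {x : ℝ} (hx : Irrational x) : 0 < Int.fract x :=
  Int.fract_pos.mpr (hx.ne_int _)

theorem Irrational.irrational_cfShift {x : ℝ} (hx : Irrational x) : Irrational (cfShift x) := by
  rw [cfShift, one_div]
  exact (hx.sub_intCast _).inv

theorem Irrational.one_lt_cfShift {x : ℝ} (hx : Irrational x) : 1 < cfShift x := by
  rw [cfShift_eq_inv_fract]
  exact one_lt_inv₀ hx.fract_pos |>.mpr (Int.fract_lt_one x)

theorem Irrational.sub_floor_mul_cfShift {x : ℝ} (hx : Irrational x) :
    (x - ⌊x⌋) * cfShift x = 1 := by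
  rw [cfShift_eq_inv_fract, Int.self_sub_floor]
  exact mul_inv_cancel₀ hx.fract_pos.ne'

def CommonTail (x y : ℝ) : Prop := ∃ i j : ℕ, cfShift^[i] x = cfShift^[j] y

theorem CommonTail.of_cfShift_left {x y : ℝ} (h : CommonTail (cfShift x) y) : CommonTail x y :=
  let ⟨i, j, hij⟩ := h
  ⟨i + 1, j, by rwa [Function.iterate_succ_apply]⟩

theorem CommonTail.of_cfShift_right {x y : ℝ} (h : CommonTail x (cfShift y)) : CommonTail x y :=
  let ⟨i, j, hij⟩ := h
  ⟨i, j + 1, by rwa [Function.iterate_succ_apply]⟩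

theorem commonTail_add_intCast (x : ℝ) (b : ℤ) : CommonTail x (x + b) :=
  ⟨1, 1, by simp only [Function.iterate_one, cfShift_add_intCast]⟩

structure MobiusRel (a b c d : ℤ) (z y : ℝ) : Prop where
  isUnit_det : IsUnit (a * d - b * c)
  denom_pos : 0 < (c : ℝ) * z + d
  map_eq : (a : ℝ) * z + b = y * (c * z + d)

theorem exists_mobiusRel {a b c d : ℤ} {x y : ℝ} (hx : Irrational x)
    (hdet : IsUnit (a * d - b * c)) (h : ((a : ℝ) * x + b) / (c * x + d) = y) :
    ∃ a' b' c' d' : ℤ, MobiusRel a' b' c' d' x y := by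
  have hden : (c : ℝ) * x + d ≠ 0 := by
    rcases eq_or_ne c 0 with rfl | hc
    · rintro hd
      simp only [Int.cast_zero, zero_mul, zero_add, Int.cast_eq_zero] at hd
      simp [hd] at hdet
    · exact ((hx.intCast_mul hc).add_intCast d).ne_zero
  rw [div_eq_iff hden] at h
  rcases hden.lt_or_gt with hneg | hpos
  · refine ⟨-a, -b, -c, -d, by convert hdet using 1; ring, by push_cast; linarith, ?_⟩
    push_cast
    linear_combination -h
  · exact ⟨a, b, c, d, hdet, hpos, by linear_combination h⟩

namespace MobiusRel

variable {a b c d : ℤ} {z y : ℝ}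

theorem cfShift_left (h : MobiusRel a b c d z y) (hz : Irrational z) :
    MobiusRel (a * ⌊z⌋ + b) a (c * ⌊z⌋ + d) c (cfShift z) y := by
  have hrow (p q : ℤ) : ((p * ⌊z⌋ + q : ℤ) : ℝ) * cfShift z + p = cfShift z * (p * z + q) := by
    push_cast
    linear_combination (-(p : ℝ)) * hz.sub_floor_mul_cfShift
  refine ⟨by convert h.isUnit_det.neg using 1; ring, ?_, ?_⟩
  · rw [hrow]
    exact mul_pos (zero_lt_one.trans hz.one_lt_cfShift) h.denom_pos
  · rw [hrow, hrow, h.map_eq]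
    ring

theorem cfShift_right (h : MobiusRel a b c d z y) (hy : Irrational y) :
    MobiusRel c d (a - ⌊y⌋ * c) (b - ⌊y⌋ * d) z (cfShift y) := by
  have hnum : ((a - ⌊y⌋ * c : ℤ) : ℝ) * z + (b - ⌊y⌋ * d : ℤ) = (y - ⌊y⌋) * (c * z + d) := by
    push_cast
    linear_combination h.map_eq
  refine ⟨by convert h.isUnit_det.neg using 1; ring, ?_, ?_⟩
  · rw [hnum, Int.self_sub_floor]
    exact mul_pos hy.fract_pos h.denom_pos
  · rw [hnum]
    linear_combination (-((c : ℝ) * z + d)) * hy.sub_floor_mul_cfShift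

theorem floor_mul_le (h : MobiusRel a b c d z y) (hz : 1 < z) (hy : Irrational y)
    (hb : 0 ≤ b) (hc : 1 ≤ c) (hd : 0 ≤ d) : ⌊y⌋ * c ≤ a ∧ ⌊y⌋ * d ≤ b := by
  -- A negative entry of the new bottom row `(p, q)`, where `p z + q > 0`,
  -- would force `|c q - d p| ≥ 2`.
  obtain ⟨hdet, hpos, -⟩ := h.cfShift_right hy
  set p := a - ⌊y⌋ * c
  set q := b - ⌊y⌋ * d
  have hdet' := Int.isUnit_iff.mp hdet
  have hp : 0 ≤ p := by
    by_contra! hp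
    have hp' : (p : ℝ) ≤ -1 := by exact_mod_cast Int.le_sub_one_of_lt hp
    have hq : (1 : ℝ) < q := by nlinarith
    have hq' : 2 ≤ q := by exact_mod_cast hq
    rcases hdet' with h1 | h1 <;> nlinarith
  have hq : 0 ≤ q := by
    rcases hd.eq_or_lt with rfl | hd
    · simpa [q] using hb
    by_contra! hq
    have hq' : (q : ℝ) ≤ -1 := by exact_mod_cast Int.le_sub_one_of_lt hq
    have hp' : (0 : ℝ) < p := by nlinarith
    have hp'' : 1 ≤ p := by exact_mod_cast hp'
    rcases hdet' with h1 | h1 <;> nlinarith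
  constructor <;> omega

theorem commonTail_of_nonneg {a b c d : ℤ} {z y : ℝ} (h : MobiusRel a b c d z y) (hz : 1 < z)
    (hy : Irrational y) (hy1 : 1 < y) (ha : 0 ≤ a) (hb : 0 ≤ b) (hc : 0 ≤ c) (hd : 0 ≤ d) :
    CommonTail z y := by
  rcases hc.eq_or_lt with rfl | hc
  · have had : a * d = 1 := by
      rcases Int.isUnit_iff.mp h.isUnit_det with h1 | h1 <;> simp at h1
      · exact h1
      · nlinarith
    obtain ⟨rfl, rfl⟩ : a = 1 ∧ d = 1 :=
      ⟨Int.eq_one_of_mul_eq_one_right ha had, Int.eq_one_of_mul_eq_one_left hd had⟩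
    have : y = z + b := by have := h.map_eq; push_cast at this; linarith
    exact this ▸ commonTail_add_intCast z b
  · obtain ⟨hac, hbd⟩ := h.floor_mul_le hz hy hb hc hd
    have hm : 1 ≤ ⌊y⌋ := Int.le_floor.mpr (by exact_mod_cast hy1.le)
    exact ((h.cfShift_right hy).commonTail_of_nonneg hz hy.irrational_cfShift hy.one_lt_cfShift
      hc.le hd (by omega) (by omega)).of_cfShift_right
termination_by (a + b + c + d).toNat
decreasing_by
  have := le_mul_of_one_le_left hc.le hm
  have := le_mul_of_one_le_left hd hm
  omega

theorem pos_of_one_le (h : MobiusRel a b c d z y) (hz : 0 < z) (hy : 1 ≤ y) (hc : 1 ≤ c)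
    (hd : 1 ≤ d) : 0 < a ∧ 0 < b := by
  have hc' : (1 : ℝ) ≤ c := by exact_mod_cast hc
  have hd' : (1 : ℝ) ≤ d := by exact_mod_cast hd
  have hdet : |((a * d - b * c : ℤ) : ℝ)| ≤ 1 := by
    rcases Int.isUnit_iff.mp h.isUnit_det with h1 | h1 <;> simp [h1]
  push_cast at hdet
  obtain ⟨hdet₁, hdet₂⟩ := abs_le.mp hdet
  have hT : z < c * z + d := by nlinarith
  have hcy : 1 ≤ (c : ℝ) * y := one_le_mul_of_one_le_of_one_le hc' hy
  have hdy : 1 ≤ (d : ℝ) * y := one_le_mul_of_one_le_of_one_le hd' hy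
  -- With `T = c z + d > max 1 z` these give `c y - a < 1` and `d y - b < 1`.
  have hrow₁ : ((c : ℝ) * y - a) * (c * z + d) = -(a * d - b * c) := by
    linear_combination (-(c : ℝ)) * h.map_eq
  have hrow₂ : ((d : ℝ) * y - b) * (c * z + d) = (a * d - b * c) * z := by
    linear_combination (-(d : ℝ)) * h.map_eq
  constructor
  · by_contra! ha
    have ha' : (a : ℝ) ≤ 0 := by exact_mod_cast ha
    nlinarith [mul_le_mul_of_nonneg_right (by linarith : 1 ≤ (c : ℝ) * y - a) h.denom_pos.le]
  · by_contra! hb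
    have hb' : (b : ℝ) ≤ 0 := by exact_mod_cast hb
    nlinarith [mul_le_mul_of_nonneg_right (by linarith : 1 ≤ (d : ℝ) * y - b) h.denom_pos.le]

theorem one_le_mul_floor_add (h : MobiusRel a b c d z y) (hc : c ≤ 0) : 1 ≤ c * ⌊z⌋ + d := by
  have : (0 : ℝ) < c * ⌊z⌋ + d := by
    have := mul_le_mul_of_nonpos_left (Int.floor_le z) (Int.cast_nonpos.mpr hc)
    linarith [h.denom_pos]
  exact_mod_cast this

theorem commonTail_of_one_le_of_nonneg (h : MobiusRel a b c d z y) (hz : Irrational z)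
    (hz1 : 1 < z) (hy : Irrational y) (hy1 : 1 < y) (hc : 1 ≤ c) (hd : 0 ≤ d) : CommonTail z y := by
  have h₁ := h.cfShift_left hz
  have hn : 1 ≤ ⌊z⌋ := Int.le_floor.mpr (by exact_mod_cast hz1.le)
  have hc₁ : 1 ≤ c * ⌊z⌋ + d := by nlinarith
  obtain ⟨ha₁, hb₁⟩ := h₁.pos_of_one_le (zero_lt_one.trans hz.one_lt_cfShift) hy1.le hc₁ hc
  exact (h₁.commonTail_of_nonneg hz.one_lt_cfShift hy hy1 ha₁.le hb₁.le (by omega)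
    (by omega)).of_cfShift_left

theorem commonTail_of_one_le {a b c d : ℤ} {z y : ℝ} (h : MobiusRel a b c d z y)
    (hz : Irrational z) (hz1 : 1 < z) (hy : Irrational y) (hy1 : 1 < y) (hc : 1 ≤ c) :
    CommonTail z y := by
  rcases le_or_gt 0 d with hd | hd
  · exact h.commonTail_of_one_le_of_nonneg hz hz1 hy hy1 hc hd
  have h₁ := h.cfShift_left hz
  have hz₁ := hz.irrational_cfShift
  rcases le_or_gt 1 (c * ⌊z⌋ + d) with hc₁ | hc₁
  · exact (h₁.commonTail_of_one_le_of_nonneg hz₁ hz.one_lt_cfShift hy hy1 hc₁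
      (by omega)).of_cfShift_left
  have h₂ := h₁.cfShift_left hz₁
  have hc₂ := h₁.one_le_mul_floor_add (by omega)
  rcases (by omega : c * ⌊z⌋ + d = 0 ∨ c * ⌊z⌋ + d < 0) with hzero | hneg
  · exact (h₂.commonTail_of_one_le_of_nonneg hz₁.irrational_cfShift hz₁.one_lt_cfShift hy hy1
      hc₂ hzero.ge).of_cfShift_left.of_cfShift_left
  · have hn : 1 ≤ ⌊cfShift z⌋ := Int.le_floor.mpr (by exact_mod_cast hz.one_lt_cfShift.le)
    have : (c * ⌊z⌋ + d) * ⌊cfShift z⌋ + c < c := by nlinarith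
    exact (h₂.commonTail_of_one_le hz₁.irrational_cfShift hz₁.one_lt_cfShift hy hy1
      hc₂).of_cfShift_left.of_cfShift_left
termination_by c.toNat

theorem commonTail (h : MobiusRel a b c d z y) (hz : Irrational z) (hy : Irrational y) :
    CommonTail z y := by
  have h₁ := (h.cfShift_left hz).cfShift_right hy
  have hz₁ := hz.irrational_cfShift
  have hy₁ := hy.irrational_cfShift
  refine CommonTail.of_cfShift_left (CommonTail.of_cfShift_right ?_)
  rcases le_or_gt 1 (a * ⌊z⌋ + b - ⌊y⌋ * (c * ⌊z⌋ + d)) with hc | hc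
  · exact h₁.commonTail_of_one_le hz₁ hz.one_lt_cfShift hy₁ hy.one_lt_cfShift hc
  · exact ((h₁.cfShift_left hz₁).commonTail_of_one_le hz₁.irrational_cfShift
      hz₁.one_lt_cfShift hy₁ hy.one_lt_cfShift
      (h₁.one_le_mul_floor_add (by omega))).of_cfShift_left

end MobiusRel

theorem equivalent_implies_common_tail (x y : ℝ) (hx : Irrational x) (hy : Irrational y)
    (a b c d : ℤ) (hdet : a * d - b * c = 1 ∨ a * d - b * c = -1)
    (h : ((a : ℝ) * x + b) / ((c : ℝ) * x + d) = y) :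
    ∃ i j : ℕ, cfShift^[i] x = cfShift^[j] y := by
  obtain ⟨a', b', c', d', hrel⟩ := exists_mobiusRel hx (Int.isUnit_iff.mpr hdet) h
  exact hrel.commonTail hx hy
end

section
/- Let Δ be a positive nonsquare integer. For every x ∈ I_Δ, the derivative x' := 1/(x - ⌊x⌋) also lies in I_Δ. -/
def MemIDelta (Δ : ℤ) (x : ℝ) : Prop :=
  ∃ a b c : ℤ, a ≠ 0 ∧ b ^ 2 - a * c = Δ ∧ x = (-b - Real.sqrt Δ) / a

theorem Real.sqrt_intCast_ne_intCast {Δ : ℤ} (hΔ : 0 ≤ Δ) (hΔns : ¬ IsSquare Δ) (m : ℤ) :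
    Real.sqrt Δ ≠ m := by
  intro h
  have hsq : ((m * m : ℤ) : ℝ) = Δ := by
    rw [Int.cast_mul, ← h, Real.mul_self_sqrt (by exact_mod_cast hΔ)]
  exact hΔns ⟨m, by exact_mod_cast hsq.symm⟩

theorem MemIDelta.sub_intCast {Δ : ℤ} {x : ℝ} (hx : MemIDelta Δ x) (n : ℤ) :
    MemIDelta Δ (x - n) := by
  obtain ⟨a, b, c, ha, hD, rfl⟩ := hx
  refine ⟨a, b + n * a, c + 2 * n * b + n ^ 2 * a, ha, by linear_combination hD, ?_⟩
  push_cast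
  field_simp
  ring

/-- Multiplying numerator and denominator of `a / (-b - √Δ)` by the conjugate `-b + √Δ` turns the
denominator into `b ^ 2 - Δ = a * c`, which is nonzero because `Δ` is not a square. -/
theorem MemIDelta.inv {Δ : ℤ} (hΔ : 0 ≤ Δ) (hΔns : ¬ IsSquare Δ) {x : ℝ}
    (hx : MemIDelta Δ x) : MemIDelta Δ x⁻¹ := by
  obtain ⟨a, b, c, ha, hD, rfl⟩ := hx
  have hc : c ≠ 0 := by
    rintro rfl
    exact hΔns ⟨b, by linear_combination -hD⟩
  have hden : -(b : ℝ) - Real.sqrt Δ ≠ 0 := fun h =>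
    Real.sqrt_intCast_ne_intCast hΔ hΔns (-b) (by push_cast; linarith)
  refine ⟨-c, -b, -a, neg_ne_zero.2 hc, by linear_combination hD, ?_⟩
  rw [inv_div, div_eq_div_iff hden (by exact_mod_cast neg_ne_zero.2 hc)]
  have hDR : (b : ℝ) ^ 2 - a * c = Δ := by exact_mod_cast hD
  push_cast
  linear_combination hDR - Real.sq_sqrt (Int.cast_nonneg_iff.mpr hΔ)

theorem IDelta_closed_under_derivative (Δ : ℤ) (hΔpos : 0 < Δ) (hΔns : ¬ IsSquare Δ)
    (x : ℝ) (hx : MemIDelta Δ x) :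
    MemIDelta Δ (1 / (x - ⌊x⌋)) := by
  rw [one_div]
  exact (hx.sub_intCast ⌊x⌋).inv hΔpos.le hΔns
end
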